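/- arXiv:math/0603269 — 2 statements merged into one kernel-verified Lean document; each statement's English description precedes it below -/
import Mathlib

section
/- Let Λ and Γ be abelian groups, n, m ≥ 1, z_1,…,z_n ∈ Λ, g_1,…,g_m ∈ Γ, η_1,…,η_n characters of Λ, and χ_1,…,χ_m characters of Γ. Let φ : Λ → Hom(Γ, k^×) be a group homomorphism into the character group of Γ, let s : {1,…,n} → {1,…,m} be a function, let l_1,…,l_n ∈ k, and set I' = {1 ≤ i ≤ n : l_i ≠ 0}. Assume that for all i ∈ I' one has φ(z_i) = χ_{s(i)}^{−1} and η_i(z) = φ(z)(g_{s(i)}) for all z ∈ Λ. Assume further that, with q_{ij} := η_j(z_i), one has q_{ij} q_{ji} = q_{ii}^{a_{ij}} for all 1 ≤ i,j ≤ n, where (a_{ij}) is an n×n Cartan matrix of finite type, and that for every 1 ≤ i ≤ n the multiplicative order of q_{ii} is greater than 3 (possibly infinite). Then the restriction of s to I' is injective. -/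
/-- `a` is a Cartan matrix of finite type: diagonal entries `2`, off-diagonal entries `≤ 0`,
`a i j = 0 ↔ a j i = 0`, and there are positive integers `d i` symmetrizing `a` such that the
symmetrized matrix is positive definite. -/
def IsFiniteCartanMatrix {n : ℕ} (a : Fin n → Fin n → ℤ) : Prop :=
  (∀ i, a i i = 2) ∧
  (∀ i j, i ≠ j → a i j ≤ 0) ∧
  (∀ i j, (a i j = 0 ↔ a j i = 0)) ∧
  ∃ d : Fin n → ℤ, (∀ i, 0 < d i) ∧ (∀ i j, d i * a i j = d j * a j i) ∧
    (Matrix.of fun i j => ((d i * a i j : ℤ) : ℝ)).PosDef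

open Matrix in
lemma aux_bc {n : ℕ} (d : Fin n → ℤ) (a : Fin n → Fin n → ℤ)
    (hd : ∀ i, 0 < d i) (h2 : ∀ i, a i i = 2)
    (hsym : ∀ i j, d i * a i j = d j * a j i)
    (hpd : (Matrix.of fun i j => ((d i * a i j : ℤ) : ℝ)).PosDef)
    {i j : Fin n} (hij : i ≠ j) : a i j * a j i < 4 := by
  set M : Matrix (Fin n) (Fin n) ℝ := Matrix.of fun i j => ((d i * a i j : ℤ) : ℝ) with hM
  set x : ℝ := ((2 * d i * a i j : ℤ) : ℝ) with hx
  set y : ℝ := ((-4 * d i : ℤ) : ℝ) with hy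
  set v : Fin n → ℝ := Pi.single i x + Pi.single j y with hv
  have hvne : v ≠ 0 := by
    intro h
    have := congrFun h j
    simp [hv, Pi.single_apply, hij, hy] at this
    have := hd i
    push_cast at this ⊢
    nlinarith [hd i, this]
  have hq := hpd.dotProduct_mulVec_pos hvne
  have hcomp : v ⬝ᵥ M *ᵥ v =
      x * (M i i * x) + x * (M i j * y) + (y * (M j i * x) + y * (M j j * y)) := by
    simp [hv, dotProduct_add, add_dotProduct, Matrix.mulVec_add,
      Matrix.mulVec_single, single_dotProduct]
    ring
  simp only [star_trivial] at hq
  rw [hcomp] at hq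
  have hMii : M i i = ((d i * a i i : ℤ) : ℝ) := rfl
  have hMij : M i j = ((d i * a i j : ℤ) : ℝ) := rfl
  have hMji : M j i = ((d j * a j i : ℤ) : ℝ) := rfl
  have hMjj : M j j = ((d j * a j j : ℤ) : ℝ) := rfl
  rw [hMii, hMij, hMji, hMjj, hx, hy] at hq
  have hsymR : ((d i : ℝ)) * (a i j : ℝ) = (d j : ℝ) * (a j i : ℝ) := by
    exact_mod_cast hsym i j
  have hdiR : (0:ℝ) < (d i : ℝ) := by exact_mod_cast hd i
  have hdjR : (0:ℝ) < (d j : ℝ) := by exact_mod_cast hd j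
  rw [h2 i, h2 j] at hq
  push_cast at hq
  have key : (a i j : ℝ) * (a j i : ℝ) < 4 := by
    nlinarith [hq, hsymR, hdiR, hdjR, sq_nonneg ((d i : ℝ) * (a i j : ℝ)),
      mul_pos hdiR hdjR, mul_pos (mul_pos hdiR hdiR) hdjR]
  exact_mod_cast key

lemma order_le_three {G : Type*} [Group G] (Q : G) (h : Q ^ (2:ℕ) = 1 ∨ Q ^ (3:ℕ) = 1) :
    orderOf Q ≠ 0 ∧ orderOf Q ≤ 3 := by
  rcases h with h | h <;> have hd := orderOf_dvd_of_pow_eq_one h <;>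
    exact ⟨fun h0 => by rw [h0] at hd; exact absurd (zero_dvd_iff.mp hd) (by norm_num),
      le_trans (Nat.le_of_dvd (by norm_num) hd) (by norm_num)⟩

theorem statement7 {k : Type*} [Field k] [IsAlgClosed k] [CharZero k]
    {Λ Γ : Type*} [CommGroup Λ] [CommGroup Γ] {n m : ℕ}
    (hn : 1 ≤ n) (hm : 1 ≤ m)
    (z : Fin n → Λ) (g : Fin m → Γ)
    (η : Fin n → Λ →* kˣ) (χ : Fin m → Γ →* kˣ)
    (φ : Λ →* (Γ →* kˣ)) (s : Fin n → Fin m) (l : Fin n → k)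
    (hφ : ∀ i, l i ≠ 0 → φ (z i) = (χ (s i))⁻¹)
    (hη : ∀ i, l i ≠ 0 → ∀ z' : Λ, η i z' = φ z' (g (s i)))
    (a : Fin n → Fin n → ℤ) (ha : IsFiniteCartanMatrix a)
    (hCartan : ∀ i j, η j (z i) * η i (z j) = η i (z i) ^ (a i j))
    (hord : ∀ i, orderOf (η i (z i)) = 0 ∨ 3 < orderOf (η i (z i))) :
    Set.InjOn s {i | l i ≠ 0} := by
  intro i hi j hj hsij
  by_contra hij
  obtain ⟨h2, hoff, hzero, d, hd, hsym, hpd⟩ := ha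
  have hi' : l i ≠ 0 := hi
  have hj' : l j ≠ 0 := hj
  set Q : kˣ := ((χ (s i)) (g (s i)))⁻¹ with hQ
  -- all four values equal Q
  have e3 : η j (z i) = Q := by
    rw [hη j hj' (z i), hφ i hi', ← hsij, hQ, MonoidHom.inv_apply]
  have e4 : η i (z j) = Q := by
    rw [hη i hi' (z j), hφ j hj', ← hsij, hQ, MonoidHom.inv_apply]
  have e1 : η i (z i) = Q := by
    rw [hη i hi' (z i), hφ i hi', hQ, MonoidHom.inv_apply]
  have e2 : η j (z j) = Q := by
    rw [hη j hj' (z j), hφ j hj', ← hsij, hQ, MonoidHom.inv_apply]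
  have hCij : Q * Q = Q ^ (a i j) := by
    have h := hCartan i j; rw [e3, e4, e1] at h; exact h
  have hCji : Q * Q = Q ^ (a j i) := by
    have h := hCartan j i; rw [e3, e4, e2] at h; exact h
  have hb : a i j ≤ 0 := hoff i j hij
  have hc : a j i ≤ 0 := hoff j i (Ne.symm hij)
  have hbc : a i j * a j i < 4 := aux_bc d a hd h2 hsym hpd hij
  have key3 : ∀ b : ℤ, b = -1 → Q * Q = Q ^ b → Q ^ (3:ℕ) = 1 := by
    intro b hb' hC
    rw [hb'] at hC
    rw [pow_succ, pow_two, hC]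
    simp
  have hpow : Q ^ (2:ℕ) = 1 ∨ Q ^ (3:ℕ) = 1 := by
    rcases eq_or_lt_of_le hb with hb0 | hb1
    · -- a i j = 0
      left
      rw [pow_two, hCij, hb0]; simp
    · -- a i j ≤ -1
      rcases eq_or_lt_of_le (show a i j ≤ -1 by omega) with hbm1 | hbm2
      · exact Or.inr (key3 _ hbm1 hCij)
      · -- a i j ≤ -2, so a j i = -1
        have hcne : a j i ≠ 0 := fun h => by
          have := (hzero j i).mp h; omega
        have : a j i = -1 := by
          by_contra hne
          have hc2 : a j i ≤ -2 := by omega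
          nlinarith [mul_nonneg (by omega : (0:ℤ) ≤ -(a i j) - 2)
            (by omega : (0:ℤ) ≤ -(a j i) - 2)]
        exact Or.inr (key3 _ this hCji)
  obtain ⟨h0, h3⟩ := order_le_three Q hpow
  have := hord i
  rw [e1] at this
  omega
end

section
/- Let D_red = D_red(Γ, (L_i), (K_i), (χ_i), (a_{ij})) be a reduced datum of finite Cartan type with n vertices and let l = (l_1,…,l_n) be nonzero scalars in k. For each connected component J of the Dynkin graph of (a_{ij}) suppose chosen q_J ∈ k^× and positive integers d_i (i ∈ J) such that q_{ii} = q_J^{2 d_i} for all i ∈ J and d_i a_{ij} = d_j a_{ji} for all i,j ∈ J. For 1 ≤ i,j ≤ n set p_{ij} = q_{ij} q_J^{−d_i a_{ij}} if i and j lie in the same component J, and p_{ij} = q_{ij} if i ≁ j. In U(D_red, l) set E_i = y_i and F_i = x_i T_{L_i}^{−1}. Then: (a) for all i ≠ j, with J the component containing i, Σ_{s=0}^{1−a_{ij}} (−p_{ij})^s · binom(1−a_{ij}, s)_{q_J^{d_i}} · E_i^{1−a_{ij}−s} E_j E_i^s = 0; (b) for all i ≠ j, Σ_{s=0}^{1−a_{ij}}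 (−p_{ij}^{−1})^s · binom(1−a_{ij}, s)_{q_J^{d_i}} · F_i^{1−a_{ij}−s} F_j F_i^s = 0; (c) for all 1 ≤ i,j ≤ n, E_i F_j − F_j E_i = δ_{ij} q_{ii}^{−1} l_i (T_{K_i} − T_{L_i}^{−1}); (d) for all g ∈ Γ and 1 ≤ i ≤ n, T_g E_i T_g^{−1} = χ_i(g) E_i and T_g F_i T_g^{−1} = χ_i(g)^{−1} F_i. -/
open scoped BigOperators

/-- The Dynkin graph of the Cartan matrix `a`: an edge between `i ≠ j` iff `a i j ≠ 0`. -/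
def dynkinGraph {n : ℕ} (a : Fin n → Fin n → ℤ) : SimpleGraph (Fin n) :=
  SimpleGraph.fromRel fun i j => a i j ≠ 0

/-- `D_red(Γ, (L i), (K i), (χ i), (a i j))` is a reduced datum of finite Cartan type. -/
def IsReducedDatum {k : Type*} [Field k] {Γ : Type*} [CommGroup Γ] {n : ℕ}
    (L K : Fin n → Γ) (χ : Fin n → Γ →* kˣ) (a : Fin n → Fin n → ℤ) : Prop :=
  IsFiniteCartanMatrix a ∧
  (∀ i j, χ i (K j) * χ j (K i) = χ i (K i) ^ (a i j)) ∧
  (∀ i j, χ i (L j) = χ j (K i)) ∧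
  (∀ i, K i * L i ≠ 1) ∧
  (∀ i, χ i (K i) ≠ 1)

/-- The Gaussian binomial coefficient `binom(a, s)_q` (the specialization at `q` of the
Gaussian binomial polynomial), defined via the Pascal-type recursion
`binom(a+1, s+1)_q = binom(a, s)_q + q^(s+1) * binom(a, s+1)_q`. -/
def gaussBinomial {k : Type*} [Field k] (q : k) : ℕ → ℕ → k
  | _, 0 => 1
  | 0, _ + 1 => 0
  | a + 1, s + 1 => gaussBinomial q a s + q ^ (s + 1) * gaussBinomial q a (s + 1)

/-- The balanced `v`-binomial coefficient `binom(a, s)_v`, i.e. `v^(-s*(a-s))` times the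
specialization at `v²` of the Gaussian binomial polynomial `binom(a, s)`. -/
def balancedQBinom {k : Type*} [Field k] (v : kˣ) (a s : ℕ) : k :=
  ((v⁻¹ : kˣ) : k) ^ (s * (a - s)) * gaussBinomial ((v : k) ^ 2) a s

noncomputable section

variable (k : Type*) [Field k] (Γ : Type*) [CommGroup Γ]

/-- The generator `x i` of the free algebra on `x_1, …, x_n`, `y_1, …, y_n` and `T_g`. -/
def Xgen {n : ℕ} (i : Fin n) : FreeAlgebra k (Fin n ⊕ Fin n ⊕ Γ) :=
  FreeAlgebra.ι k (Sum.inl i)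

/-- The generator `y i` of the free algebra on `x_1, …, x_n`, `y_1, …, y_n` and `T_g`. -/
def Ygen {n : ℕ} (i : Fin n) : FreeAlgebra k (Fin n ⊕ Fin n ⊕ Γ) :=
  FreeAlgebra.ι k (Sum.inr (Sum.inl i))

/-- The generator `T g` of the free algebra on `x_1, …, x_n`, `y_1, …, y_n` and `T_g`. -/
def Tgen (n : ℕ) (gg : Γ) : FreeAlgebra k (Fin n ⊕ Fin n ⊕ Γ) :=
  FreeAlgebra.ι k (Sum.inr (Sum.inr gg))

/-- The braided adjoint action `ad_c(x_i) : z ↦ x_i z − T_{L_i} z T_{L_i⁻¹} x_i`. -/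
def adcX {n : ℕ} (L : Fin n → Γ) (i : Fin n) (z : FreeAlgebra k (Fin n ⊕ Fin n ⊕ Γ)) :
    FreeAlgebra k (Fin n ⊕ Fin n ⊕ Γ) :=
  Xgen k Γ i * z - Tgen k Γ n (L i) * z * Tgen k Γ n (L i)⁻¹ * Xgen k Γ i

/-- The braided adjoint action `ad_c(y_i) : z ↦ y_i z − T_{K_i} z T_{K_i⁻¹} y_i`. -/
def adcY {n : ℕ} (K : Fin n → Γ) (i : Fin n) (z : FreeAlgebra k (Fin n ⊕ Fin n ⊕ Γ)) :
    FreeAlgebra k (Fin n ⊕ Fin n ⊕ Γ) :=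
  Ygen k Γ i * z - Tgen k Γ n (K i) * z * Tgen k Γ n (K i)⁻¹ * Ygen k Γ i

/-- The defining relations of `U(D_red, l)`. -/
inductive RedRel {n : ℕ} (L K : Fin n → Γ) (χ : Fin n → Γ →* kˣ) (a : Fin n → Fin n → ℤ)
    (l : Fin n → k) :
    FreeAlgebra k (Fin n ⊕ Fin n ⊕ Γ) → FreeAlgebra k (Fin n ⊕ Fin n ⊕ Γ) → Prop
  | group_mul (g₁ g₂ : Γ) :
      RedRel L K χ a l (Tgen k Γ n g₁ * Tgen k Γ n g₂) (Tgen k Γ n (g₁ * g₂))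
  | group_one :
      RedRel L K χ a l (Tgen k Γ n (1 : Γ)) 1
  | act_x (gg : Γ) (i : Fin n) :
      RedRel L K χ a l (Tgen k Γ n gg * Xgen k Γ i)
        ((((χ i gg)⁻¹ : kˣ) : k) • (Xgen k Γ i * Tgen k Γ n gg))
  | act_y (gg : Γ) (i : Fin n) :
      RedRel L K χ a l (Tgen k Γ n gg * Ygen k Γ i)
        ((χ i gg : k) • (Ygen k Γ i * Tgen k Γ n gg))
  | serre_x (i j : Fin n) (hne : i ≠ j) :
      RedRel L K χ a l ((adcX k Γ L i)^[(1 - a i j).toNat] (Xgen k Γ j)) 0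
  | serre_y (i j : Fin n) (hne : i ≠ j) :
      RedRel L K χ a l ((adcY k Γ K i)^[(1 - a i j).toNat] (Ygen k Γ j)) 0
  | cross (i j : Fin n) :
      RedRel L K χ a l
        (Xgen k Γ i * Ygen k Γ j - (χ j (L i) : k) • (Ygen k Γ j * Xgen k Γ i))
        (if i = j then l i • ((1 : FreeAlgebra k (Fin n ⊕ Fin n ⊕ Γ)) - Tgen k Γ n (K i * L i))
          else 0)

/-- The algebra `U(D_red, l)`. -/
abbrev URed {n : ℕ} (L K : Fin n → Γ) (χ : Fin n → Γ →* kˣ) (a : Fin n → Fin n → ℤ)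
    (l : Fin n → k) :=
  RingQuot (RedRel k Γ L K χ a l)

end

namespace MyAux

section Gauss
variable {k : Type*} [Field k] (q : k)

@[simp] lemma gauss_zero_right (m : ℕ) : gaussBinomial q m 0 = 1 := by
  cases m <;> rfl

lemma gauss_succ_succ (m s : ℕ) :
    gaussBinomial q (m+1) (s+1) = gaussBinomial q m s + q ^ (s+1) * gaussBinomial q m (s+1) := rfl

lemma gauss_eq_zero : ∀ m s, m < s → gaussBinomial q m s = 0 := by
  intro m
  induction m with
  | zero => intro s hs; match s, hs with | s+1, _ => rfl
  | succ m ih =>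
    intro s hs
    match s, hs with
    | s+1, hs =>
      rw [gauss_succ_succ, ih s (by omega), ih (s+1) (by omega)]
      ring

lemma gauss_one_right : ∀ m, gaussBinomial q m 1 = ∑ i ∈ Finset.range m, q ^ i := by
  intro m
  induction m with
  | zero => simp [gaussBinomial]
  | succ m ih =>
    rw [gauss_succ_succ, ih, gauss_zero_right, geom_sum_succ]
    ring

lemma gauss_A : ∀ m s, (q^(s+1) - 1) * gaussBinomial q m (s+1) = (q^(m-s) - 1) * gaussBinomial q m s := by
  intro m
  induction m with
  | zero =>
    intro s
    simp [gauss_eq_zero q 0 (s+1) (by omega)]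
  | succ m ih =>
    intro s
    match s with
    | 0 =>
      rw [gauss_one_right, gauss_zero_right, mul_one, Nat.sub_zero, pow_one, mul_comm]
      exact geom_sum_mul q (m+1)
    | t+1 =>
      by_cases hm : t < m
      · obtain ⟨u, hu⟩ : ∃ u, m = t + 1 + u := ⟨m - (t+1), by omega⟩
        subst hu
        rw [gauss_succ_succ, gauss_succ_succ]
        have h1 := ih (t+1)
        have h2 := ih t
        rw [show t + 1 + u - (t+1) = u by omega] at h1
        rw [show t + 1 + u - t = u + 1 by omega] at h2
        rw [show t + 1 + u + 1 - (t+1) = u + 1 by omega]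
        linear_combination q^(t+2) * h1 + h2
      · have hz1 : gaussBinomial q (m+1) (t+2) = 0 := gauss_eq_zero q (m+1) (t+2) (by omega)
        rw [hz1, mul_zero]
        by_cases hmt : m = t
        · subst hmt
          rw [show m + 1 - (m + 1) = 0 by omega]
          simp
        · rw [gauss_eq_zero q (m+1) (t+1) (by omega), mul_zero]

lemma gauss_rec2 (m s : ℕ) :
    gaussBinomial q (m+1) (s+1) = q^(m-s) * gaussBinomial q m s + gaussBinomial q m (s+1) := by
  have hA := gauss_A q m s
  rw [gauss_succ_succ]
  linear_combination hA

lemma gauss_inv (hq : q ≠ 0) : ∀ m s, s ≤ m →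
    gaussBinomial q⁻¹ m s = (q⁻¹)^(s*(m-s)) * gaussBinomial q m s := by
  intro m
  induction m with
  | zero => intro s hs; interval_cases s; simp
  | succ m ih =>
    intro s hs
    match s with
    | 0 => simp
    | t+1 =>
      rw [gauss_succ_succ, gauss_rec2]
      by_cases hm : t + 1 ≤ m
      · rw [ih t (by omega), ih (t+1) hm]
        rw [show m + 1 - (t+1) = m - t by omega]
        obtain ⟨u, hu⟩ : ∃ u, m = t + 1 + u := ⟨m - (t+1), by omega⟩
        subst hu
        rw [show t + 1 + u - t = u + 1 by omega, show t + 1 + u - (t+1) = u by omega]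
        have h : q^(u+1) * q⁻¹^(u+1) = 1 := by rw [← mul_pow, mul_inv_cancel₀ hq, one_pow]
        field_simp
        linear_combination (-(q⁻¹^t*q⁻¹^(t*u)*gaussBinomial q (t+1+u) t)) * h
      · have htm : t = m := by omega
        subst htm
        rw [gauss_eq_zero q t (t+1) (by omega), gauss_eq_zero q⁻¹ t (t+1) (by omega)]
        rw [ih t (le_refl t)]
        rw [show t + 1 - (t + 1) = 0 by omega, show t - t = 0 by omega]
        simp
end Gauss

lemma choose_two_succ (s : ℕ) : (s+1).choose 2 = s.choose 2 + s := by
  rw [show (2:ℕ) = 1 + 1 from rfl, Nat.choose_succ_succ, Nat.choose_one_right, Nat.add_comm]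

lemma two_mul_choose_two (s : ℕ) : 2 * s.choose 2 = s * (s-1) := by
  induction s with
  | zero => rfl
  | succ s ih =>
    rw [choose_two_succ, Nat.mul_add, ih]
    cases s with
    | zero => rfl
    | succ v => simp only [Nat.succ_sub_one]; ring

lemma choose_two_add (c e : ℕ) : (c+e).choose 2 = c.choose 2 + e.choose 2 + c*e := by
  have h := two_mul_choose_two (c+e)
  have h1 := two_mul_choose_two c
  have h2 := two_mul_choose_two e
  have key : (c+e) * ((c+e) - 1) = c*(c-1) + e*(e-1) + 2*(c*e) := by
    cases c with
    | zero => simp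
    | succ v =>
      cases e with
      | zero => simp
      | succ w =>
        rw [show v+1+(w+1)-1 = v+w+1 by omega, Nat.succ_sub_one, Nat.succ_sub_one]
        ring
  refine Nat.eq_of_mul_eq_mul_left (by norm_num : 0 < 2) ?_
  rw [h, key, Nat.mul_add, Nat.mul_add, h1, h2]

noncomputable def cfADC {k : Type*} [Field k] (r q : k) (m s : ℕ) : k :=
  (-r)^s * q^(s.choose 2) * gaussBinomial q m s

lemma cf_rec {k : Type*} [Field k] (r q : k) (m s : ℕ) :
    cfADC r q (m+1) (s+1) = cfADC r q m (s+1) - q^m * r * cfADC r q m s := by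
  unfold cfADC
  rw [gauss_rec2]
  by_cases hs : s ≤ m
  · have hc : (s+1).choose 2 + (m-s) = m + s.choose 2 := by
      rw [choose_two_succ]; omega
    have e : q^((s+1).choose 2) * q^(m-s) = q^m * q^(s.choose 2) := by
      rw [← pow_add, ← pow_add, hc]
    linear_combination ((-r)^(s+1) * gaussBinomial q m s) * e
  · rw [gauss_eq_zero q m s (by omega), gauss_eq_zero q m (s+1) (by omega)]
    ring

lemma cf_zero_right {k : Type*} [Field k] (r q : k) (m : ℕ) : cfADC r q m 0 = 1 := by
  simp [cfADC]

section ADC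
variable {k : Type*} [Field k] {R : Type*} [Ring R] [Algebra k R]
variable (Y W T T' : R) (q r : k)

lemma Tpow (hTY : T * Y = q • (Y * T)) : ∀ c, T * Y^c = q^c • (Y^c * T) := by
  intro c
  induction c with
  | zero => simp
  | succ c ih =>
    calc T * Y^(c+1) = (T * Y^c) * Y := by rw [pow_succ, mul_assoc]
    _ = (q^c • (Y^c * T)) * Y := by rw [ih]
    _ = q^c • (Y^c * (T * Y)) := by rw [smul_mul_assoc, mul_assoc]
    _ = q^c • (Y^c * (q • (Y*T))) := by rw [hTY]
    _ = q^(c+1) • (Y^(c+1) * T) := by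
        rw [mul_smul_comm, smul_smul, ← pow_succ, ← mul_assoc, ← pow_succ]

lemma Tconj (hTT' : T * T' = 1) (hTY : T * Y = q • (Y * T)) (hTW : T * W = r • (W * T))
    (a b : ℕ) : T * (Y^a * W * Y^b) * T' = (q^(a+b) * r) • (Y^a * W * Y^b) := by
  have h1 : T * (Y^a * W * Y^b) * T' = ((T * Y^a) * W * Y^b) * T' := by
    noncomm_ring
  rw [h1, Tpow Y T q hTY a]
  rw [smul_mul_assoc, smul_mul_assoc, smul_mul_assoc]
  have h2 : Y ^ a * T * W * Y ^ b * T' = Y^a * (T * W) * Y^b * T' := by noncomm_ring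
  rw [h2, hTW, mul_smul_comm, smul_mul_assoc, smul_mul_assoc]
  have h3 : Y ^ a * (W * T) * Y ^ b * T' = (Y^a * W) * (T * Y^b) * T' := by noncomm_ring
  rw [h3, Tpow Y T q hTY b, mul_smul_comm, smul_mul_assoc]
  have h4 : Y ^ a * W * (Y ^ b * T) * T' = (Y^a * W * Y^b) * (T * T') := by noncomm_ring
  rw [h4, hTT', mul_one, smul_smul, smul_smul]
  congr 1
  rw [pow_add]
  ring

lemma adc_pow (hTT' : T * T' = 1) (hTY : T * Y = q • (Y * T)) (hTW : T * W = r • (W * T)) :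
    ∀ m, (fun z => Y * z - T * z * T' * Y)^[m] W
      = ∑ s ∈ Finset.range (m+1), cfADC r q m s • (Y^(m-s) * W * Y^s) := by
  intro m
  induction m with
  | zero => simp [cf_zero_right]
  | succ m ih =>
    rw [Function.iterate_succ_apply', ih]
    have expand : Y * (∑ s ∈ Finset.range (m+1), cfADC r q m s • (Y^(m-s) * W * Y^s))
          - T * (∑ s ∈ Finset.range (m+1), cfADC r q m s • (Y^(m-s) * W * Y^s)) * T' * Y
        = ∑ s ∈ Finset.range (m+1), cfADC r q m s •
            (Y * (Y^(m-s) * W * Y^s) - T * (Y^(m-s) * W * Y^s) * T' * Y) := by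
      simp only [Finset.mul_sum, Finset.sum_mul, mul_smul_comm, smul_mul_assoc, smul_sub,
        ← Finset.sum_sub_distrib]
    show Y * (∑ s ∈ Finset.range (m+1), cfADC r q m s • (Y^(m-s) * W * Y^s))
          - T * (∑ s ∈ Finset.range (m+1), cfADC r q m s • (Y^(m-s) * W * Y^s)) * T' * Y
        = ∑ s ∈ Finset.range (m+1+1), cfADC r q (m+1) s • (Y^(m+1-s) * W * Y^s)
    rw [expand]
    have term : ∀ s ∈ Finset.range (m+1), cfADC r q m s •
          (Y * (Y^(m-s) * W * Y^s) - T * (Y^(m-s) * W * Y^s) * T' * Y)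
        = cfADC r q m s • (Y^(m+1-s) * W * Y^s)
          - (q^m * r * cfADC r q m s) • (Y^(m+1-(s+1)) * W * Y^(s+1)) := by
      intro s hs
      rw [Finset.mem_range] at hs
      have hsm : s ≤ m := by omega
      have e1 : Y * (Y^(m-s) * W * Y^s) = Y^(m+1-s) * W * Y^s := by
        rw [show m+1-s = (m-s)+1 by omega, pow_succ']
        noncomm_ring
      have e2 : T * (Y^(m-s) * W * Y^s) * T' * Y = (q^m * r) • (Y^(m+1-(s+1)) * W * Y^(s+1)) := by
        have h := Tconj Y W T T' q r hTT' hTY hTW (m-s) s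
        rw [show m-s+s = m by omega] at h
        rw [h, smul_mul_assoc]
        congr 1
        rw [show m+1-(s+1) = m-s by omega, pow_succ]
        noncomm_ring
      rw [e1, e2, smul_sub, smul_smul]
      congr 2
      ring
    rw [Finset.sum_congr rfl term, Finset.sum_sub_distrib]
    have hfirst : ∑ s ∈ Finset.range (m+1), cfADC r q m s • (Y^(m+1-s) * W * Y^s)
        = ∑ s ∈ Finset.range (m+1+1), cfADC r q m s • (Y^(m+1-s) * W * Y^s) := by
      rw [Finset.sum_range_succ (n := m+1)]
      rw [cfADC, gauss_eq_zero q m (m+1) (by omega)]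
      simp
    rw [hfirst,
        Finset.sum_range_succ' (fun s => cfADC r q m s • (Y^(m+1-s) * W * Y^s)) (m+1),
        Finset.sum_range_succ' (fun s => cfADC r q (m+1) s • (Y^(m+1-s) * W * Y^s)) (m+1)]
    simp only [cf_zero_right]
    have key : (∑ s ∈ Finset.range (m+1), cfADC r q m (s+1) • (Y^(m+1-(s+1)) * W * Y^(s+1)))
          - ∑ s ∈ Finset.range (m+1), (q^m * r * cfADC r q m s) • (Y^(m+1-(s+1)) * W * Y^(s+1))
        = ∑ s ∈ Finset.range (m+1), cfADC r q (m+1) (s+1) • (Y^(m+1-(s+1)) * W * Y^(s+1)) := by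
      rw [← Finset.sum_sub_distrib]
      refine Finset.sum_congr rfl fun s hs => ?_
      rw [cf_rec, sub_smul]
    rw [add_sub_right_comm, key]
end ADC

lemma coeff_a {k : Type*} [Field k] (V R : k) (hV : V ≠ 0) (m s : ℕ) (hs : s ≤ m) :
    (-(R * V^(m-1)))^s * ((V⁻¹)^(s*(m-s)) * gaussBinomial (V^2) m s)
      = cfADC R (V^2) m s := by
  rcases Nat.eq_zero_or_pos s with rfl | hspos
  · simp [cfADC]
  obtain ⟨u, rfl⟩ : ∃ u, s = u + 1 := ⟨s-1, by omega⟩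
  obtain ⟨t, rfl⟩ : ∃ t, m = (u+1) + t := ⟨m - (u+1), by omega⟩
  unfold cfADC
  rw [show (u+1) + t - 1 = u + t by omega, show (u+1) + t - (u+1) = t by omega]
  have e3 : (V^2)^((u+1).choose 2) = V^((u+1)*u) := by
    rw [← pow_mul, two_mul_choose_two, Nat.succ_sub_one]
  rw [e3]
  generalize gaussBinomial (V^2) ((u+1)+t) (u+1) = B
  simp only [inv_pow]
  field_simp
  ring

lemma coeff_b {k : Type*} [Field k] (V R G : k) (hV : V ≠ 0) (hR : R ≠ 0) (hG : G ≠ 0)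
    (m s : ℕ) (hs : s ≤ m) :
    ((-(R * V^(m-1))⁻¹)^s * ((V⁻¹)^(s*(m-s)) * gaussBinomial (V^2) m s))
        * ((V^2)^(m.choose 2) * ((G^(m-s)) * (R^s)))
      = ((V^2)^(m.choose 2) * G^m) * cfADC G⁻¹ (V^2)⁻¹ m s := by
  unfold cfADC
  rw [gauss_inv (V^2) (pow_ne_zero 2 hV) m s hs]
  rcases Nat.eq_zero_or_pos s with rfl | hspos
  · simp
  obtain ⟨u, rfl⟩ : ∃ u, s = u + 1 := ⟨s-1, by omega⟩
  obtain ⟨t, rfl⟩ : ∃ t, m = (u+1) + t := ⟨m - (u+1), by omega⟩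
  rw [show (u+1) + t - 1 = u + t by omega, show (u+1) + t - (u+1) = t by omega]
  have e3 : ((V^2)⁻¹)^((u+1).choose 2) = (V^((u+1)*u))⁻¹ := by
    rw [inv_pow, ← pow_mul, two_mul_choose_two, Nat.succ_sub_one]
  rw [e3]
  generalize gaussBinomial (V^2) ((u+1)+t) (u+1) = B
  have hRV : R * V^(u+t) ≠ 0 := mul_ne_zero hR (pow_ne_zero _ hV)
  have hR1 : R^(u+1) * R⁻¹^(u+1) = 1 := by rw [← mul_pow, mul_inv_cancel₀ hR, one_pow]
  have hG1 : G^(u+1) * G⁻¹^(u+1) = 1 := by rw [← mul_pow, mul_inv_cancel₀ hG, one_pow]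
  have hV1 : V^(u+u*t+u^2+t) * V⁻¹^(u+u*t+u^2+t) = 1 := by
    rw [← mul_pow, mul_inv_cancel₀ hV, one_pow]
  generalize (V^2)^((u+1+t).choose 2) = C
  rw [mul_inv, ← inv_pow V (u+t), ← inv_pow V ((u+1)*u), ← inv_pow V 2, ← pow_mul V⁻¹ 2,
    neg_pow (R⁻¹ * V⁻¹^(u+t)) (u+1), neg_pow G⁻¹ (u+1), mul_pow R⁻¹ (V⁻¹^(u+t)) (u+1),
    ← pow_mul V⁻¹ (u+t) (u+1)]
  generalize V⁻¹ = V'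
  generalize R⁻¹ = R' at hR1 ⊢
  generalize G⁻¹ = G' at hG1 ⊢
  linear_combination ((-1)^(u+1) * B * C * G^t * V'^((u+t)*(u+1)) * V'^((u+1)*t)) * hR1
    - ((-1)^(u+1) * B * C * G^t * V'^((u+t)*(u+1)) * V'^((u+1)*t)) * hG1

end MyAux

namespace MyAux
section Ulemmas
variable {k : Type*} [Field k] {Γ : Type*} [CommGroup Γ] {n : ℕ}
  {L K : Fin n → Γ} {χ : Fin n → Γ →* kˣ} {a : Fin n → Fin n → ℤ} {l : Fin n → k}

local notation "π" => RingQuot.mkAlgHom k (RedRel k Γ L K χ a l)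

lemma T_mul (g h : Γ) : π (Tgen k Γ n g) * π (Tgen k Γ n h) = π (Tgen k Γ n (g*h)) := by
  rw [← map_mul]
  exact RingQuot.mkAlgHom_rel k (RedRel.group_mul (L:=L) (K:=K) (χ:=χ) (a:=a) (l:=l) g h)

lemma T_one : π (Tgen k Γ n (1:Γ)) = 1 := by
  have h := RingQuot.mkAlgHom_rel k (RedRel.group_one (L:=L) (K:=K) (χ:=χ) (a:=a) (l:=l) (n:=n))
  rwa [map_one] at h

lemma T_invl (g : Γ) : π (Tgen k Γ n g) * π (Tgen k Γ n g⁻¹) = 1 := by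
  rw [T_mul, mul_inv_cancel, T_one]

lemma T_invr (g : Γ) : π (Tgen k Γ n g⁻¹) * π (Tgen k Γ n g) = 1 := by
  rw [T_mul, inv_mul_cancel, T_one]

lemma T_X (g : Γ) (i : Fin n) :
    π (Tgen k Γ n g) * π (Xgen k Γ i)
      = (((χ i g)⁻¹ : kˣ) : k) • (π (Xgen k Γ i) * π (Tgen k Γ n g)) := by
  have h := RingQuot.mkAlgHom_rel k (RedRel.act_x (L:=L) (K:=K) (χ:=χ) (a:=a) (l:=l) g i)
  rw [map_mul, map_smul, map_mul] at h
  exact h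

lemma T_Y (g : Γ) (i : Fin n) :
    π (Tgen k Γ n g) * π (Ygen k Γ i)
      = ((χ i g : kˣ) : k) • (π (Ygen k Γ i) * π (Tgen k Γ n g)) := by
  have h := RingQuot.mkAlgHom_rel k (RedRel.act_y (L:=L) (K:=K) (χ:=χ) (a:=a) (l:=l) g i)
  rw [map_mul, map_smul, map_mul] at h
  exact h

lemma serreY (i j : Fin n) (hne : i ≠ j) :
    π ((adcY k Γ K i)^[(1 - a i j).toNat] (Ygen k Γ j)) = 0 := by
  have h := RingQuot.mkAlgHom_rel k (RedRel.serre_y (L:=L) (K:=K) (χ:=χ) (a:=a) (l:=l) i j hne)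
  rwa [map_zero] at h

lemma serreX (i j : Fin n) (hne : i ≠ j) :
    π ((adcX k Γ L i)^[(1 - a i j).toNat] (Xgen k Γ j)) = 0 := by
  have h := RingQuot.mkAlgHom_rel k (RedRel.serre_x (L:=L) (K:=K) (χ:=χ) (a:=a) (l:=l) i j hne)
  rwa [map_zero] at h

lemma crossRel (i j : Fin n) :
    π (Xgen k Γ i) * π (Ygen k Γ j) - ((χ j (L i) : kˣ) : k) • (π (Ygen k Γ j) * π (Xgen k Γ i))
      = if i = j then l i • ((1 : URed k Γ L K χ a l) - π (Tgen k Γ n (K i * L i))) else 0 := by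
  have h := RingQuot.mkAlgHom_rel k (RedRel.cross (L:=L) (K:=K) (χ:=χ) (a:=a) (l:=l) i j)
  rw [map_sub, map_mul, map_smul, map_mul, apply_ite π, map_smul, map_sub, map_one,
      map_zero] at h
  exact h

lemma mk_adcY_iter (i : Fin n) (m : ℕ) (z : FreeAlgebra k (Fin n ⊕ Fin n ⊕ Γ)) :
    π ((adcY k Γ K i)^[m] z)
      = (fun w => π (Ygen k Γ i) * w
          - π (Tgen k Γ n (K i)) * w * π (Tgen k Γ n (K i)⁻¹) * π (Ygen k Γ i))^[m] (π z) := by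
  have hsc : Function.Semiconj (⇑(RingQuot.mkAlgHom k (RedRel k Γ L K χ a l)))
      (adcY k Γ K i)
      (fun w => π (Ygen k Γ i) * w
        - π (Tgen k Γ n (K i)) * w * π (Tgen k Γ n (K i)⁻¹) * π (Ygen k Γ i)) := by
    intro z
    simp only [adcY, map_sub, map_mul]
  exact (hsc.iterate_right m) z

lemma mk_adcX_iter (i : Fin n) (m : ℕ) (z : FreeAlgebra k (Fin n ⊕ Fin n ⊕ Γ)) :
    π ((adcX k Γ L i)^[m] z)
      = (fun w => π (Xgen k Γ i) * w
          - π (Tgen k Γ n (L i)) * w * π (Tgen k Γ n (L i)⁻¹) * π (Xgen k Γ i))^[m] (π z) := by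
  have hsc : Function.Semiconj (⇑(RingQuot.mkAlgHom k (RedRel k Γ L K χ a l)))
      (adcX k Γ L i)
      (fun w => π (Xgen k Γ i) * w
        - π (Tgen k Γ n (L i)) * w * π (Tgen k Γ n (L i)⁻¹) * π (Xgen k Γ i)) := by
    intro z
    simp only [adcX, map_sub, map_mul]
  exact (hsc.iterate_right m) z

/-- Serre sum for the `Y`'s equals zero, with `cfADC` coefficients. -/
lemma serre_sum_Y (i j : Fin n) (hne : i ≠ j) :
    ∑ s ∈ Finset.range ((1 - a i j).toNat + 1),
      cfADC ((χ j (K i) : kˣ) : k) ((χ i (K i) : kˣ) : k) ((1 - a i j).toNat) s •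
        (π (Ygen k Γ i) ^ ((1 - a i j).toNat - s) * π (Ygen k Γ j) * π (Ygen k Γ i) ^ s)
      = 0 := by
  rw [← adc_pow (π (Ygen k Γ i)) (π (Ygen k Γ j)) (π (Tgen k Γ n (K i)))
      (π (Tgen k Γ n (K i)⁻¹)) _ _ (T_invl (K i)) (T_Y (K i) i) (T_Y (K i) j)
      ((1 - a i j).toNat)]
  rw [← mk_adcY_iter]
  exact serreY i j hne

/-- Serre sum for the `X`'s equals zero, with `cfADC` coefficients. -/
lemma serre_sum_X (i j : Fin n) (hne : i ≠ j) :
    ∑ s ∈ Finset.range ((1 - a i j).toNat + 1),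
      cfADC (((χ j (L i))⁻¹ : kˣ) : k) (((χ i (L i))⁻¹ : kˣ) : k) ((1 - a i j).toNat) s •
        (π (Xgen k Γ i) ^ ((1 - a i j).toNat - s) * π (Xgen k Γ j) * π (Xgen k Γ i) ^ s)
      = 0 := by
  rw [← adc_pow (π (Xgen k Γ i)) (π (Xgen k Γ j)) (π (Tgen k Γ n (L i)))
      (π (Tgen k Γ n (L i)⁻¹)) _ _ (T_invl (L i)) (T_X (L i) i) (T_X (L i) j)
      ((1 - a i j).toNat)]
  rw [← mk_adcX_iter]
  exact serreX i j hne

/-- `F i ^ c` in terms of `X i ^ c` and a group element. -/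
lemma Fpow (i : Fin n) (c : ℕ) :
    (π (Xgen k Γ i) * π (Tgen k Γ n (L i)⁻¹))^c
      = ((χ i (L i) : kˣ) : k)^(c.choose 2) •
          (π (Xgen k Γ i)^c * π (Tgen k Γ n (((L i)⁻¹)^c))) := by
  induction c with
  | zero => simp [T_one]
  | succ c ih =>
    have hval : ((χ i (((L i)⁻¹)^c) : kˣ)⁻¹ : kˣ) = (χ i (L i))^c := by
      simp [map_pow, map_inv]
    calc (π (Xgen k Γ i) * π (Tgen k Γ n (L i)⁻¹))^(c+1)
        = ((χ i (L i) : kˣ) : k)^(c.choose 2) •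
            ((π (Xgen k Γ i)^c * π (Tgen k Γ n (((L i)⁻¹)^c)))
              * (π (Xgen k Γ i) * π (Tgen k Γ n (L i)⁻¹))) := by
          rw [pow_succ, ih, smul_mul_assoc]
      _ = ((χ i (L i) : kˣ) : k)^(c.choose 2) •
            (π (Xgen k Γ i)^c * (π (Tgen k Γ n (((L i)⁻¹)^c)) * π (Xgen k Γ i))
              * π (Tgen k Γ n (L i)⁻¹)) := by
          congr 1
          noncomm_ring
      _ = (((χ i (L i) : kˣ) : k)^(c.choose 2) * ((χ i (L i) : kˣ) : k)^c) •
            (π (Xgen k Γ i)^c * (π (Xgen k Γ i) * π (Tgen k Γ n (((L i)⁻¹)^c)))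
              * π (Tgen k Γ n (L i)⁻¹)) := by
          rw [T_X (((L i)⁻¹)^c) i, hval, mul_smul_comm, smul_mul_assoc, smul_smul]
          norm_cast
      _ = ((χ i (L i) : kˣ) : k)^((c+1).choose 2) •
            (π (Xgen k Γ i)^(c+1) * π (Tgen k Γ n (((L i)⁻¹)^(c+1)))) := by
          rw [choose_two_succ, pow_add]
          congr 1
          rw [pow_succ ((L i)⁻¹) c, ← T_mul, pow_succ (π (Xgen k Γ i)) c]
          noncomm_ring

/-- `F i^c * F j * F i^e` in terms of `X`-monomials. -/
lemma Fmono (i j : Fin n) (c e : ℕ) :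
    (π (Xgen k Γ i) * π (Tgen k Γ n (L i)⁻¹))^c * (π (Xgen k Γ j) * π (Tgen k Γ n (L j)⁻¹))
        * (π (Xgen k Γ i) * π (Tgen k Γ n (L i)⁻¹))^e
      = (((χ i (L i) : kˣ) : k)^((c+e).choose 2)
          * (((χ j (L i) : kˣ) : k)^c * ((χ i (L j) : kˣ) : k)^e)) •
          (π (Xgen k Γ i)^c * π (Xgen k Γ j) * π (Xgen k Γ i)^e
            * π (Tgen k Γ n (((L i)⁻¹)^(c+e) * (L j)⁻¹))) := by
  have hXj : π (Tgen k Γ n (((L i)⁻¹)^c)) * π (Xgen k Γ j)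
      = ((χ j (L i) : kˣ) : k)^c • (π (Xgen k Γ j) * π (Tgen k Γ n (((L i)⁻¹)^c))) := by
    have hu : ((χ j (((L i)⁻¹)^c))⁻¹ : kˣ) = (χ j (L i))^c := by
      simp [map_pow, map_inv]
    rw [T_X (((L i)⁻¹)^c) j, hu, Units.val_pow_eq_pow_val]
  have hXe : π (Tgen k Γ n (((L i)⁻¹)^c * (L j)⁻¹)) * π (Xgen k Γ i)^e
      = (((χ i (L i) : kˣ) : k)^c * ((χ i (L j) : kˣ) : k))^e •
          (π (Xgen k Γ i)^e * π (Tgen k Γ n (((L i)⁻¹)^c * (L j)⁻¹))) := by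
    have hu : ((χ i (((L i)⁻¹)^c * (L j)⁻¹))⁻¹ : kˣ) = (χ i (L i))^c * χ i (L j) := by
      simp [map_mul, map_pow, map_inv, mul_comm]
    have h := Tpow (π (Xgen k Γ i)) (π (Tgen k Γ n (((L i)⁻¹)^c * (L j)⁻¹)))
      (((χ i (((L i)⁻¹)^c * (L j)⁻¹))⁻¹ : kˣ) : k) (T_X (((L i)⁻¹)^c * (L j)⁻¹) i) e
    rw [hu] at h
    rw [h]
    norm_cast
  rw [Fpow i c, Fpow i e]
  rw [smul_mul_assoc, smul_mul_assoc, mul_smul_comm, smul_smul]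
  have inner1 : π (Xgen k Γ i)^c * π (Tgen k Γ n (((L i)⁻¹)^c))
        * (π (Xgen k Γ j) * π (Tgen k Γ n (L j)⁻¹))
        * (π (Xgen k Γ i)^e * π (Tgen k Γ n (((L i)⁻¹)^e)))
      = π (Xgen k Γ i)^c * (π (Tgen k Γ n (((L i)⁻¹)^c)) * π (Xgen k Γ j))
        * π (Tgen k Γ n (L j)⁻¹) * π (Xgen k Γ i)^e * π (Tgen k Γ n (((L i)⁻¹)^e)) := by
    noncomm_ring
  rw [inner1, hXj]
  simp only [mul_smul_comm, smul_mul_assoc, smul_smul]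
  have inner2 : π (Xgen k Γ i)^c * (π (Xgen k Γ j) * π (Tgen k Γ n (((L i)⁻¹)^c)))
        * π (Tgen k Γ n (L j)⁻¹) * π (Xgen k Γ i)^e * π (Tgen k Γ n (((L i)⁻¹)^e))
      = π (Xgen k Γ i)^c * π (Xgen k Γ j)
        * ((π (Tgen k Γ n (((L i)⁻¹)^c)) * π (Tgen k Γ n (L j)⁻¹)) * π (Xgen k Γ i)^e)
        * π (Tgen k Γ n (((L i)⁻¹)^e)) := by
    noncomm_ring
  rw [inner2, T_mul, hXe]
  simp only [mul_smul_comm, smul_mul_assoc, smul_smul]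
  have inner3 : π (Xgen k Γ i)^c * π (Xgen k Γ j)
        * (π (Xgen k Γ i)^e * π (Tgen k Γ n (((L i)⁻¹)^c * (L j)⁻¹)))
        * π (Tgen k Γ n (((L i)⁻¹)^e))
      = π (Xgen k Γ i)^c * π (Xgen k Γ j) * π (Xgen k Γ i)^e
        * (π (Tgen k Γ n (((L i)⁻¹)^c * (L j)⁻¹)) * π (Tgen k Γ n (((L i)⁻¹)^e))) := by
    noncomm_ring
  rw [inner3, T_mul,
    show ((L i)⁻¹)^c * (L j)⁻¹ * ((L i)⁻¹)^e = ((L i)⁻¹)^(c+e) * (L j)⁻¹ by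
      rw [mul_right_comm, ← pow_add]]
  congr 1
  rw [MyAux.choose_two_add, mul_pow]
  ring

end Ulemmas
end MyAux

open scoped Classical in
theorem statement14 {k : Type*} [Field k] [IsAlgClosed k] [CharZero k]
    {Γ : Type*} [CommGroup Γ] {n : ℕ} (hn : 1 ≤ n)
    (L K : Fin n → Γ) (χ : Fin n → Γ →* kˣ) (a : Fin n → Fin n → ℤ)
    (hD : IsReducedDatum L K χ a)
    (l : Fin n → k) (hl : ∀ i, l i ≠ 0)
    (qc : Fin n → kˣ) (d : Fin n → ℕ)
    (hqc : ∀ i j, (dynkinGraph a).Reachable i j → qc i = qc j)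
    (hd : ∀ i, 0 < d i)
    (hqd : ∀ i, χ i (K i) = qc i ^ (2 * d i))
    (hsym : ∀ i j, (dynkinGraph a).Reachable i j → (d i : ℤ) * a i j = (d j : ℤ) * a j i)
    (p : Fin n → Fin n → kˣ)
    (hp : ∀ i j, p i j =
      if (dynkinGraph a).Reachable i j then χ j (K i) * qc i ^ (-((d i : ℤ) * a i j))
      else χ j (K i)) :
    -- (a) the quantum Serre relations for the `E i = y i`
    (∀ i j, i ≠ j →
      ∑ s ∈ Finset.range ((1 - a i j).toNat + 1),
        algebraMap k (URed k Γ L K χ a l)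
            ((-(p i j : k)) ^ s * balancedQBinom (qc i ^ d i) (1 - a i j).toNat s) *
          ((RingQuot.mkAlgHom k (RedRel k Γ L K χ a l) (Ygen k Γ i)) ^ ((1 - a i j).toNat - s) *
            RingQuot.mkAlgHom k (RedRel k Γ L K χ a l) (Ygen k Γ j) *
            (RingQuot.mkAlgHom k (RedRel k Γ L K χ a l) (Ygen k Γ i)) ^ s) = 0) ∧
    -- (b) the quantum Serre relations for the `F i = x i * T (L i)⁻¹`
    (∀ i j, i ≠ j →
      ∑ s ∈ Finset.range ((1 - a i j).toNat + 1),
        algebraMap k (URed k Γ L K χ a l)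
            ((-(((p i j)⁻¹ : kˣ) : k)) ^ s * balancedQBinom (qc i ^ d i) (1 - a i j).toNat s) *
          ((RingQuot.mkAlgHom k (RedRel k Γ L K χ a l)
              (Xgen k Γ i * Tgen k Γ n (L i)⁻¹)) ^ ((1 - a i j).toNat - s) *
            RingQuot.mkAlgHom k (RedRel k Γ L K χ a l) (Xgen k Γ j * Tgen k Γ n (L j)⁻¹) *
            (RingQuot.mkAlgHom k (RedRel k Γ L K χ a l)
              (Xgen k Γ i * Tgen k Γ n (L i)⁻¹)) ^ s) = 0) ∧
    -- (c) the commutator relation for `E i` and `F j`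
    (∀ i j,
      RingQuot.mkAlgHom k (RedRel k Γ L K χ a l) (Ygen k Γ i) *
          RingQuot.mkAlgHom k (RedRel k Γ L K χ a l) (Xgen k Γ j * Tgen k Γ n (L j)⁻¹) -
        RingQuot.mkAlgHom k (RedRel k Γ L K χ a l) (Xgen k Γ j * Tgen k Γ n (L j)⁻¹) *
          RingQuot.mkAlgHom k (RedRel k Γ L K χ a l) (Ygen k Γ i) =
      if i = j then
        algebraMap k (URed k Γ L K χ a l) ((((χ i (K i))⁻¹ : kˣ) : k) * l i) *
          (RingQuot.mkAlgHom k (RedRel k Γ L K χ a l) (Tgen k Γ n (K i)) -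
            RingQuot.mkAlgHom k (RedRel k Γ L K χ a l) (Tgen k Γ n (L i)⁻¹))
      else 0) ∧
    -- (d) the action of the group
    (∀ (gg : Γ) (i : Fin n),
      RingQuot.mkAlgHom k (RedRel k Γ L K χ a l) (Tgen k Γ n gg) *
          RingQuot.mkAlgHom k (RedRel k Γ L K χ a l) (Ygen k Γ i) *
          RingQuot.mkAlgHom k (RedRel k Γ L K χ a l) (Tgen k Γ n gg⁻¹) =
        algebraMap k (URed k Γ L K χ a l) (χ i gg : k) *
          RingQuot.mkAlgHom k (RedRel k Γ L K χ a l) (Ygen k Γ i) ∧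
      RingQuot.mkAlgHom k (RedRel k Γ L K χ a l) (Tgen k Γ n gg) *
          RingQuot.mkAlgHom k (RedRel k Γ L K χ a l) (Xgen k Γ i * Tgen k Γ n (L i)⁻¹) *
          RingQuot.mkAlgHom k (RedRel k Γ L K χ a l) (Tgen k Γ n gg⁻¹) =
        algebraMap k (URed k Γ L K χ a l) (((χ i gg)⁻¹ : kˣ) : k) *
          RingQuot.mkAlgHom k (RedRel k Γ L K χ a l) (Xgen k Γ i * Tgen k Γ n (L i)⁻¹)) := by
  classical
  obtain ⟨hcart, hcompat, hLK, hKL1, hqne⟩ := hD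
  have haneg : ∀ i j : Fin n, i ≠ j → a i j ≤ 0 := hcart.2.1
  -- the key unit-level relation `p i j = q_{ij} * v_i^{m-1}`
  have hPu : ∀ i j : Fin n, i ≠ j →
      p i j = χ j (K i) * (qc i ^ d i)^((1 - a i j).toNat - 1) := by
    intro i j hij
    rw [hp i j]
    by_cases hreach : (dynkinGraph a).Reachable i j
    · rw [if_pos hreach]
      set A := (1 - a i j).toNat - 1 with hAdef
      have haA : a i j = -(A : ℤ) := by
        have := haneg i j hij; omega
      congr 1
      rw [show -((d i : ℤ) * a i j) = (d i : ℤ) * (A : ℤ) by rw [haA]; ring]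
      rw [zpow_mul, zpow_natCast, zpow_natCast]
    · rw [if_neg hreach]
      have ha0 : a i j = 0 := by
        by_contra h
        exact hreach (SimpleGraph.Adj.reachable
          (by rw [dynkinGraph, SimpleGraph.fromRel_adj]; exact ⟨hij, Or.inl h⟩))
      rw [ha0]
      norm_num
  have hQu : ∀ i : Fin n, χ i (K i) = (qc i ^ d i)^2 := by
    intro i
    rw [hqd i, mul_comm, pow_mul]
  refine ⟨?_, ?_, ?_, ?_⟩
  · -- (a)
    intro i j hij
    set m := (1 - a i j).toNat with hm
    have hqK : ((χ i (K i) : kˣ) : k) = ((((qc i : kˣ) : k))^(d i))^2 := by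
      exact_mod_cast congrArg Units.val (hQu i)
    have hpk : ((p i j : kˣ) : k) = ((χ j (K i) : kˣ) : k) * ((((qc i : kˣ) : k))^(d i))^(m-1) := by
      exact_mod_cast congrArg Units.val (hPu i j hij)
    have hcongr : ∀ s ∈ Finset.range (m+1),
        algebraMap k (URed k Γ L K χ a l)
            ((-(p i j : k)) ^ s * balancedQBinom (qc i ^ d i) m s) *
          ((RingQuot.mkAlgHom k (RedRel k Γ L K χ a l) (Ygen k Γ i)) ^ (m - s) *
            RingQuot.mkAlgHom k (RedRel k Γ L K χ a l) (Ygen k Γ j) *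
            (RingQuot.mkAlgHom k (RedRel k Γ L K χ a l) (Ygen k Γ i)) ^ s)
        = MyAux.cfADC ((χ j (K i) : kˣ) : k) ((χ i (K i) : kˣ) : k) m s •
          ((RingQuot.mkAlgHom k (RedRel k Γ L K χ a l) (Ygen k Γ i)) ^ (m - s) *
            RingQuot.mkAlgHom k (RedRel k Γ L K χ a l) (Ygen k Γ j) *
            (RingQuot.mkAlgHom k (RedRel k Γ L K χ a l) (Ygen k Γ i)) ^ s) := by
      intro s hs
      rw [Finset.mem_range] at hs
      rw [← Algebra.smul_def]
      congr 1
      simp only [balancedQBinom, Units.val_inv_eq_inv_val, Units.val_pow_eq_pow_val]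
      rw [hqK, hpk]
      exact MyAux.coeff_a _ _ (pow_ne_zero _ (Units.ne_zero _)) m s (by omega)
    rw [Finset.sum_congr rfl hcongr]
    exact MyAux.serre_sum_Y i j hij
  · -- (b)
    intro i j hij
    set m := (1 - a i j).toNat with hm
    have hqK : ((χ i (K i) : kˣ) : k) = ((((qc i : kˣ) : k))^(d i))^2 := by
      exact_mod_cast congrArg Units.val (hQu i)
    have hQLk : ((χ i (L i) : kˣ) : k) = ((((qc i : kˣ) : k))^(d i))^2 := by
      rw [hLK i i]; exact hqK
    have hpk : ((p i j : kˣ) : k) = ((χ j (K i) : kˣ) : k) * ((((qc i : kˣ) : k))^(d i))^(m-1) := by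
      exact_mod_cast congrArg Units.val (hPu i j hij)
    have hRk : ((χ i (L j) : kˣ) : k) = ((χ j (K i) : kˣ) : k) := by rw [hLK i j]
    have hcongr : ∀ s ∈ Finset.range (m+1),
        algebraMap k (URed k Γ L K χ a l)
            ((-(((p i j)⁻¹ : kˣ) : k)) ^ s * balancedQBinom (qc i ^ d i) m s) *
          ((RingQuot.mkAlgHom k (RedRel k Γ L K χ a l)
              (Xgen k Γ i * Tgen k Γ n (L i)⁻¹)) ^ (m - s) *
            RingQuot.mkAlgHom k (RedRel k Γ L K χ a l) (Xgen k Γ j * Tgen k Γ n (L j)⁻¹) *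
            (RingQuot.mkAlgHom k (RedRel k Γ L K χ a l)
              (Xgen k Γ i * Tgen k Γ n (L i)⁻¹)) ^ s)
        = ((((((qc i : kˣ) : k))^(d i))^2)^(m.choose 2) * ((χ j (L i) : kˣ) : k)^m *
            MyAux.cfADC (((χ j (L i))⁻¹ : kˣ) : k) (((χ i (L i))⁻¹ : kˣ) : k) m s) •
          ((RingQuot.mkAlgHom k (RedRel k Γ L K χ a l) (Xgen k Γ i)) ^ (m - s) *
            RingQuot.mkAlgHom k (RedRel k Γ L K χ a l) (Xgen k Γ j) *
            (RingQuot.mkAlgHom k (RedRel k Γ L K χ a l) (Xgen k Γ i)) ^ s *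
            RingQuot.mkAlgHom k (RedRel k Γ L K χ a l) (Tgen k Γ n (((L i)⁻¹)^m * (L j)⁻¹))) := by
      intro s hs
      rw [Finset.mem_range] at hs
      rw [← Algebra.smul_def]
      simp only [map_mul]
      rw [MyAux.Fmono i j (m-s) s, show m - s + s = m by omega, smul_smul]
      congr 1
      simp only [balancedQBinom, Units.val_inv_eq_inv_val, Units.val_pow_eq_pow_val]
      rw [hQLk, hpk, hRk]
      exact MyAux.coeff_b ((((qc i : kˣ) : k))^(d i)) ((χ j (K i) : kˣ) : k)
        ((χ j (L i) : kˣ) : k) (pow_ne_zero _ (Units.ne_zero _)) (Units.ne_zero _)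
        (Units.ne_zero _) m s (by omega)
    rw [Finset.sum_congr rfl hcongr]
    have h0 := MyAux.serre_sum_X (L:=L) (K:=K) (χ:=χ) (a:=a) (l:=l) i j hij
    calc ∑ s ∈ Finset.range (m+1),
          ((((((qc i : kˣ) : k))^(d i))^2)^(m.choose 2) * ((χ j (L i) : kˣ) : k)^m *
            MyAux.cfADC (((χ j (L i))⁻¹ : kˣ) : k) (((χ i (L i))⁻¹ : kˣ) : k) m s) •
          ((RingQuot.mkAlgHom k (RedRel k Γ L K χ a l) (Xgen k Γ i)) ^ (m - s) *
            RingQuot.mkAlgHom k (RedRel k Γ L K χ a l) (Xgen k Γ j) *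
            (RingQuot.mkAlgHom k (RedRel k Γ L K χ a l) (Xgen k Γ i)) ^ s *
            RingQuot.mkAlgHom k (RedRel k Γ L K χ a l) (Tgen k Γ n (((L i)⁻¹)^m * (L j)⁻¹)))
        = ((((((qc i : kˣ) : k))^(d i))^2)^(m.choose 2) * ((χ j (L i) : kˣ) : k)^m) •
          ((∑ s ∈ Finset.range (m+1),
            MyAux.cfADC (((χ j (L i))⁻¹ : kˣ) : k) (((χ i (L i))⁻¹ : kˣ) : k) m s •
            ((RingQuot.mkAlgHom k (RedRel k Γ L K χ a l) (Xgen k Γ i)) ^ (m - s) *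
              RingQuot.mkAlgHom k (RedRel k Γ L K χ a l) (Xgen k Γ j) *
              (RingQuot.mkAlgHom k (RedRel k Γ L K χ a l) (Xgen k Γ i)) ^ s)) *
            RingQuot.mkAlgHom k (RedRel k Γ L K χ a l) (Tgen k Γ n (((L i)⁻¹)^m * (L j)⁻¹))) := by
          rw [Finset.sum_mul, Finset.smul_sum]
          refine Finset.sum_congr rfl fun s hs => ?_
          rw [smul_mul_assoc, mul_smul]
      _ = 0 := by rw [h0, zero_mul, smul_zero]
  · -- (c)
    intro i j
    rw [map_mul]
    by_cases hij : i = j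
    · subst hij
      rw [if_pos rfl]
      have hcross := MyAux.crossRel (L:=L) (K:=K) (χ:=χ) (a:=a) (l:=l) i i
      rw [if_pos rfl] at hcross
      have hTLY : RingQuot.mkAlgHom k (RedRel k Γ L K χ a l) (Tgen k Γ n (L i)⁻¹) *
            RingQuot.mkAlgHom k (RedRel k Γ L K χ a l) (Ygen k Γ i)
          = (((χ i (L i))⁻¹ : kˣ) : k) •
            (RingQuot.mkAlgHom k (RedRel k Γ L K χ a l) (Ygen k Γ i) *
              RingQuot.mkAlgHom k (RedRel k Γ L K χ a l) (Tgen k Γ n (L i)⁻¹)) := by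
        rw [MyAux.T_Y ((L i)⁻¹) i, map_inv]
      have hA : RingQuot.mkAlgHom k (RedRel k Γ L K χ a l) (Xgen k Γ i) *
            RingQuot.mkAlgHom k (RedRel k Γ L K χ a l) (Ygen k Γ i)
          = ((χ i (L i) : kˣ) : k) •
              (RingQuot.mkAlgHom k (RedRel k Γ L K χ a l) (Ygen k Γ i) *
                RingQuot.mkAlgHom k (RedRel k Γ L K χ a l) (Xgen k Γ i))
            + l i • ((1 : URed k Γ L K χ a l) -
                RingQuot.mkAlgHom k (RedRel k Γ L K χ a l) (Tgen k Γ n (K i * L i))) := by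
        have h := sub_eq_iff_eq_add.mp hcross
        rw [h, add_comm]
      have hcinv : (((χ i (L i))⁻¹ : kˣ) : k) * ((χ i (L i) : kˣ) : k) = 1 := by
        rw [← Units.val_mul, inv_mul_cancel, Units.val_one]
      have e2 : ((1 : URed k Γ L K χ a l) -
            RingQuot.mkAlgHom k (RedRel k Γ L K χ a l) (Tgen k Γ n (K i * L i))) *
            RingQuot.mkAlgHom k (RedRel k Γ L K χ a l) (Tgen k Γ n (L i)⁻¹)
          = RingQuot.mkAlgHom k (RedRel k Γ L K χ a l) (Tgen k Γ n (L i)⁻¹)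
            - RingQuot.mkAlgHom k (RedRel k Γ L K χ a l) (Tgen k Γ n (K i)) := by
        rw [sub_mul, one_mul, MyAux.T_mul, mul_inv_cancel_right]
      rw [← mul_assoc (RingQuot.mkAlgHom k (RedRel k Γ L K χ a l) (Ygen k Γ i))
            (RingQuot.mkAlgHom k (RedRel k Γ L K χ a l) (Xgen k Γ i))
            (RingQuot.mkAlgHom k (RedRel k Γ L K χ a l) (Tgen k Γ n (L i)⁻¹)),
          mul_assoc (RingQuot.mkAlgHom k (RedRel k Γ L K χ a l) (Xgen k Γ i))
            (RingQuot.mkAlgHom k (RedRel k Γ L K χ a l) (Tgen k Γ n (L i)⁻¹))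
            (RingQuot.mkAlgHom k (RedRel k Γ L K χ a l) (Ygen k Γ i)),
          hTLY, mul_smul_comm,
          ← mul_assoc (RingQuot.mkAlgHom k (RedRel k Γ L K χ a l) (Xgen k Γ i))
            (RingQuot.mkAlgHom k (RedRel k Γ L K χ a l) (Ygen k Γ i))
            (RingQuot.mkAlgHom k (RedRel k Γ L K χ a l) (Tgen k Γ n (L i)⁻¹)),
          hA, add_mul, smul_mul_assoc, smul_mul_assoc, smul_add, smul_smul, hcinv, one_smul,
          smul_smul, e2, sub_add_cancel_left, ← Algebra.smul_def, hLK i i, smul_sub,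
          smul_sub, neg_sub]
    · rw [if_neg hij]
      have hcross := MyAux.crossRel (L:=L) (K:=K) (χ:=χ) (a:=a) (l:=l) j i
      rw [if_neg (fun h => hij h.symm)] at hcross
      have hTLY : RingQuot.mkAlgHom k (RedRel k Γ L K χ a l) (Tgen k Γ n (L j)⁻¹) *
            RingQuot.mkAlgHom k (RedRel k Γ L K χ a l) (Ygen k Γ i)
          = (((χ i (L j))⁻¹ : kˣ) : k) •
            (RingQuot.mkAlgHom k (RedRel k Γ L K χ a l) (Ygen k Γ i) *
              RingQuot.mkAlgHom k (RedRel k Γ L K χ a l) (Tgen k Γ n (L j)⁻¹)) := by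
        rw [MyAux.T_Y ((L j)⁻¹) i, map_inv]
      have hA := sub_eq_iff_eq_add.mp hcross
      rw [zero_add] at hA
      have hcinv : (((χ i (L j))⁻¹ : kˣ) : k) * ((χ i (L j) : kˣ) : k) = 1 := by
        rw [← Units.val_mul, inv_mul_cancel, Units.val_one]
      rw [← mul_assoc (RingQuot.mkAlgHom k (RedRel k Γ L K χ a l) (Ygen k Γ i))
            (RingQuot.mkAlgHom k (RedRel k Γ L K χ a l) (Xgen k Γ j))
            (RingQuot.mkAlgHom k (RedRel k Γ L K χ a l) (Tgen k Γ n (L j)⁻¹)),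
          mul_assoc (RingQuot.mkAlgHom k (RedRel k Γ L K χ a l) (Xgen k Γ j))
            (RingQuot.mkAlgHom k (RedRel k Γ L K χ a l) (Tgen k Γ n (L j)⁻¹))
            (RingQuot.mkAlgHom k (RedRel k Γ L K χ a l) (Ygen k Γ i)),
          hTLY, mul_smul_comm,
          ← mul_assoc (RingQuot.mkAlgHom k (RedRel k Γ L K χ a l) (Xgen k Γ j))
            (RingQuot.mkAlgHom k (RedRel k Γ L K χ a l) (Ygen k Γ i))
            (RingQuot.mkAlgHom k (RedRel k Γ L K χ a l) (Tgen k Γ n (L j)⁻¹)),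
          hA, smul_mul_assoc, smul_smul, hcinv, one_smul, sub_self]
  · -- (d)
    intro g i
    constructor
    · rw [MyAux.T_Y g i, smul_mul_assoc, mul_assoc, MyAux.T_invl g, mul_one, Algebra.smul_def]
    · simp only [map_mul]
      rw [← mul_assoc, MyAux.T_X g i, smul_mul_assoc, smul_mul_assoc, mul_assoc, mul_assoc,
        MyAux.T_mul, MyAux.T_mul,
        show g * ((L i)⁻¹ * g⁻¹) = (L i)⁻¹ by
          rw [mul_comm ((L i)⁻¹) g⁻¹, ← mul_assoc, mul_inv_cancel, one_mul],
        Algebra.smul_def]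
end
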